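/- Let G' be a vertex-disjoint union of complete graphs K_{p₁}, ..., K_{p_m} on [p−1] and let G be G' together with a new vertex p adjacent to all of [p−1]. Then CIM_G is a simplex of dimension 2^{p−1} − 1 − Σ_{s=1}^{m} (2^{p_s} − 1); that is, the characteristic imsets of DAGs with skeleton G form an affinely independent set of cardinality 2^{p−1} − Σ_s (2^{p_s} − 1). -/

import Mathlib

open scoped Classical

/-- A directed acyclic graph on vertex set `Fin p`. -/
structure DAGraph (p : ℕ) where
  E : Fin p → Fin p → Prop
  acyclic : ∀ i, ¬ Relation.TransGen E i i

/-- The characteristic imset of a directed graph given by the relation `E`. -/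
noncomputable def imsetRel {p : ℕ} (E : Fin p → Fin p → Prop) (S : Finset (Fin p)) : ℝ :=
  if ∃ i ∈ S, ∀ j ∈ S, j ≠ i → E j i then 1 else 0

/-- The skeleton (underlying undirected graph) of a DAG. -/
def DAGraph.skeleton {p : ℕ} (G : DAGraph p) : SimpleGraph (Fin p) where
  Adj a b := G.E a b ∨ G.E b a
  symm := ⟨fun a b h => Or.symm h⟩
  loopless := ⟨fun a h =>
    h.elim (fun h' => G.acyclic a (Relation.TransGen.single h'))
      (fun h' => G.acyclic a (Relation.TransGen.single h'))⟩

/-- The characteristic imset of a DAG. -/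
noncomputable def DAGraph.cim {p : ℕ} (G : DAGraph p) : Finset (Fin p) → ℝ := imsetRel G.E

/-- `G.vStruct a b c` : `a → b ← c` is a v-structure (with `a`, `c` non-adjacent). -/
def DAGraph.vStruct {p : ℕ} (G : DAGraph p) (a b c : Fin p) : Prop :=
  a ≠ c ∧ G.E a b ∧ G.E c b ∧ ¬ G.skeleton.Adj a c

/-- The relation obtained from `E` by reversing the single edge `i → j`. -/
def reverseRel {p : ℕ} (E : Fin p → Fin p → Prop) (i j : Fin p) : Fin p → Fin p → Prop :=
  fun a b => (E a b ∧ ¬(a = i ∧ b = j)) ∨ (a = j ∧ b = i)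

/-- The graph on `Fin (n+1)` obtained from a vertex-disjoint union of complete graphs on
`Fin n` (with components given by `comp : Fin n → Fin m`) by adding the extra vertex
`Fin.last n` adjacent to all other vertices. -/
def starJoin (n m : ℕ) (comp : Fin n → Fin m) : SimpleGraph (Fin (n + 1)) where
  Adj a b := a ≠ b ∧ (a = Fin.last n ∨ b = Fin.last n ∨
    ∃ (ha : a ≠ Fin.last n) (hb : b ≠ Fin.last n),
      comp (a.castPred ha) = comp (b.castPred hb))
  symm := by
    constructor
    rintro a b ⟨hne, h⟩
    refine ⟨hne.symm, ?_⟩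
    rcases h with h | h | ⟨ha, hb, hc⟩
    · exact Or.inr (Or.inl h)
    · exact Or.inl h
    · exact Or.inr (Or.inr ⟨hb, ha, hc.symm⟩)
  loopless := ⟨fun a h => h.1 rfl⟩

/-!
Let `h = Fin.last n` be the hub. In a DAG with skeleton `starJoin n m comp`, a set `S` whose
non-hub part lies in one block is a clique, so it contains a sink and `c(S) = 1`. Otherwise only
`h` can be a vertex of `S` receiving arrows from all the others, so `c(S) = 1` iff `h ∈ S`
and every other vertex of `S` is a parent of `h`. Hence the characteristic imset depends only
on the parent set `P` of `h`, every `P` occurs, and all `P` inside one block give the imset of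
`P = ∅`. For the remaining `P` (empty or meeting two blocks), the imset evaluated at `{h} ∪ Q`
is `[Q ⊆ P]`: a unitriangular system, so these imsets are even linearly independent, and they
are counted by `2^n - ∑ₛ (2^{pₛ} - 1)`.
-/

open Finset Relation

theorem linearIndependent_of_eval_triangular {ι X R : Type*} [PartialOrder ι] [Ring R]
    [NoZeroDivisors R] (f : ι → X → R) (x : ι → X)
    (htri : ∀ i j, f j (x i) ≠ 0 → i ≤ j) (hdiag : ∀ i, f i (x i) ≠ 0) :
    LinearIndependent R f := by
  rw [linearIndependent_iff']
  intro s g hsum i hi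
  by_contra hgi
  obtain ⟨k, hk⟩ := (s.filter (g · ≠ 0)).exists_maximal ⟨i, mem_filter.2 ⟨hi, hgi⟩⟩
  obtain ⟨hks, hgk⟩ := mem_filter.1 hk.1
  have hsum_k : ∑ j ∈ s, g j * f j (x k) = 0 := by
    simpa only [Finset.sum_apply, Pi.smul_apply, smul_eq_mul, Pi.zero_apply] using
      congrFun hsum (x k)
  rw [sum_eq_single_of_mem k hks] at hsum_k
  · exact mul_ne_zero hgk (hdiag k) hsum_k
  intro j hj hjk
  by_contra hne
  obtain ⟨hgj, hfj⟩ := mul_ne_zero_iff.1 hne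
  exact hjk (le_antisymm (hk.2 (mem_filter.2 ⟨hj, hgj⟩) (htri k j hfj)) (htri k j hfj))

namespace DAGraph

variable {p : ℕ}

theorem exists_sink (D : DAGraph p) {S : Finset (Fin p)} (hS : S.Nonempty) :
    ∃ i ∈ S, ∀ j ∈ S, ¬ D.E i j := by
  have : IsTrans (Fin p) (TransGen (Function.swap D.E)) := ⟨fun _ _ _ => TransGen.trans⟩
  have : Std.Irrefl (TransGen (Function.swap D.E)) :=
    ⟨fun i h => D.acyclic i (transGen_swap.1 h)⟩
  obtain ⟨i, hi, hmin⟩ :=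
    (Finite.wellFounded_of_trans_of_irrefl (TransGen (Function.swap D.E))).has_min S hS
  exact ⟨i, hi, fun j hj hij => hmin j hj (.single hij)⟩

theorem cim_eq_one_of_isClique (D : DAGraph p) {S : Finset (Fin p)} (hS : S.Nonempty)
    (hclique : D.skeleton.IsClique (S : Set (Fin p))) : D.cim S = 1 := by
  obtain ⟨i, hi, hsink⟩ := D.exists_sink hS
  exact if_pos ⟨i, hi, fun j hj hji =>
    (hclique hj hi hji : D.E j i ∨ D.E i j).resolve_right (hsink j hj)⟩

def ofRank (G : SimpleGraph (Fin p)) {β : Type*} [LinearOrder β] (r : Fin p → β) :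
    DAGraph p where
  E a b := G.Adj a b ∧ r a < r b
  acyclic i h := lt_irrefl (r i) <| by
    simpa only [transGen_eq_self] using h.lift r fun _ _ hab => hab.2

theorem skeleton_ofRank (G : SimpleGraph (Fin p)) {β : Type*} [LinearOrder β]
    {r : Fin p → β} (hr : Function.Injective r) : (ofRank G r).skeleton = G := by
  ext a b
  refine ⟨fun h => h.elim And.left fun h => h.1.symm, fun h => ?_⟩
  rcases lt_or_gt_of_ne (hr.ne h.ne) with hab | hab
  exacts [Or.inl ⟨h, hab⟩, Or.inr ⟨h.symm, hab⟩]

end DAGraph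

section Blocks

variable {α β : Type*}

def InOneBlock (comp : α → β) (T : Finset α) : Prop :=
  ∀ v ∈ T, ∀ w ∈ T, comp v = comp w

theorem InOneBlock.mono {comp : α → β} {T T' : Finset α} (h : InOneBlock comp T)
    (hT : T' ⊆ T) : InOneBlock comp T' :=
  fun v hv w hw => h v (hT hv) w (hT hw)

theorem inOneBlock_empty (comp : α → β) : InOneBlock comp ∅ := by
  simp [InOneBlock]

theorem card_filter_inOneBlock_nonempty [Fintype α] [Fintype β] [DecidableEq β]
    (comp : α → β) :
    #{T : Finset α | InOneBlock comp T ∧ T ≠ ∅} = ∑ b, (2 ^ #{a | comp a = b} - 1) := by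
  have hunion : ({T : Finset α | InOneBlock comp T ∧ T ≠ ∅} : Finset (Finset α)) =
      univ.biUnion fun b => (powerset {a | comp a = b}).erase ∅ := by
    ext T
    simp only [mem_filter, mem_univ, true_and, mem_biUnion, mem_erase, mem_powerset,
      subset_iff]
    constructor
    · rintro ⟨hT, hne⟩
      obtain ⟨v, hv⟩ := nonempty_iff_ne_empty.2 hne
      exact ⟨comp v, hne, fun w hw => hT w hw v hv⟩
    · rintro ⟨b, hne, hT⟩
      exact ⟨fun v hv w hw => (hT hv).trans (hT hw).symm, hne⟩
  rw [hunion, card_biUnion]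
  · exact sum_congr rfl fun b _ => by
      rw [card_erase_of_mem (empty_mem_powerset _), card_powerset]
  · intro b _ c _ hbc
    refine disjoint_left.2 fun T hTb hTc => ?_
    obtain ⟨hne, hTb⟩ := mem_erase.1 hTb
    obtain ⟨v, hv⟩ := nonempty_iff_ne_empty.2 hne
    exact hbc <| (mem_filter.1 (mem_powerset.1 hTb hv)).2.symm.trans
      (mem_filter.1 (mem_powerset.1 (mem_erase.1 hTc).2 hv)).2

theorem natCard_inOneBlock_imp_eq_empty [Fintype α] [Fintype β] [DecidableEq β]
    (comp : α → β) :
    Nat.card {P : Finset α // InOneBlock comp P → P = ∅} =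
      2 ^ Fintype.card α - ∑ b, (2 ^ #{a | comp a = b} - 1) := by
  have hsplit := card_filter_add_card_filter_not (s := univ)
    (p := fun P : Finset α => InOneBlock comp P → P = ∅)
  simp only [Classical.not_imp, card_univ, Fintype.card_finset] at hsplit
  rw [Nat.card_eq_fintype_card, Fintype.card_subtype, ← card_filter_inOneBlock_nonempty,
    ← hsplit]
  convert (Nat.add_sub_cancel _ _).symm

end Blocks

section StarJoin

variable {n m : ℕ} {comp : Fin n → Fin m}

def lowerPart (S : Finset (Fin (n + 1))) : Finset (Fin n) := {v | v.castSucc ∈ S}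

@[simp]
theorem mem_lowerPart {S : Finset (Fin (n + 1))} {v : Fin n} :
    v ∈ lowerPart S ↔ v.castSucc ∈ S := by
  simp [lowerPart]

@[simp]
theorem starJoin_adj_castSucc {v w : Fin n} :
    (starJoin n m comp).Adj v.castSucc w.castSucc ↔ v ≠ w ∧ comp v = comp w := by
  simp [starJoin, Fin.castSucc_ne_last]

@[simp]
theorem starJoin_adj_castSucc_last (v : Fin n) :
    (starJoin n m comp).Adj v.castSucc (Fin.last n) :=
  ⟨Fin.castSucc_ne_last v, Or.inr (Or.inl rfl)⟩

theorem starJoin_isClique {S : Finset (Fin (n + 1))} (hS : InOneBlock comp (lowerPart S)) :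
    (starJoin n m comp).IsClique (S : Set (Fin (n + 1))) := by
  intro a ha b hb hab
  induction a using Fin.lastCases with
  | last =>
    induction b using Fin.lastCases with
    | last => exact absurd rfl hab
    | cast w => exact (starJoin_adj_castSucc_last w).symm
  | cast v =>
    induction b using Fin.lastCases with
    | last => exact starJoin_adj_castSucc_last v
    | cast w =>
      exact starJoin_adj_castSucc.2 ⟨fun h => hab (h ▸ rfl),
        hS v (mem_lowerPart.2 ha) w (mem_lowerPart.2 hb)⟩

theorem eq_last_of_forall_starJoin_adj {S : Finset (Fin (n + 1))}
    (hS : ¬ InOneBlock comp (lowerPart S)) {i : Fin (n + 1)} (hi : i ∈ S)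
    (hadj : ∀ j ∈ S, j ≠ i → (starJoin n m comp).Adj j i) : i = Fin.last n := by
  induction i using Fin.lastCases with
  | last => rfl
  | cast v =>
    have hblock : ∀ w ∈ lowerPart S, comp w = comp v := fun w hw =>
      (eq_or_ne w v).elim (· ▸ rfl) fun hwv =>
        (starJoin_adj_castSucc.1 (hadj _ (mem_lowerPart.1 hw) (by simpa using hwv))).2
    exact absurd (fun w hw u hu => (hblock w hw).trans (hblock u hu).symm) hS

noncomputable def hubParents (D : DAGraph (n + 1)) : Finset (Fin n) :=
  {v | D.E v.castSucc (Fin.last n)}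

noncomputable def hubImset (comp : Fin n → Fin m) (P : Finset (Fin n))
    (S : Finset (Fin (n + 1))) : ℝ :=
  if S.Nonempty ∧ (InOneBlock comp (lowerPart S) ∨ (Fin.last n ∈ S ∧ lowerPart S ⊆ P))
  then 1 else 0

theorem cim_eq_hubImset {D : DAGraph (n + 1)} (hD : D.skeleton = starJoin n m comp) :
    D.cim = hubImset comp (hubParents D) := by
  have hadj : ∀ {a b}, D.E a b → (starJoin n m comp).Adj a b := fun h => hD ▸ Or.inl h
  funext S
  rcases S.eq_empty_or_nonempty with rfl | hne
  · simp [DAGraph.cim, imsetRel, hubImset]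
  by_cases hS : InOneBlock comp (lowerPart S)
  · rw [hubImset, if_pos ⟨hne, Or.inl hS⟩]
    exact D.cim_eq_one_of_isClique hne (hD ▸ starJoin_isClique hS)
  have hsink : (∃ i ∈ S, ∀ j ∈ S, j ≠ i → D.E j i) ↔
      Fin.last n ∈ S ∧ lowerPart S ⊆ hubParents D := by
    constructor
    · rintro ⟨i, hi, hpa⟩
      obtain rfl := eq_last_of_forall_starJoin_adj hS hi fun j hj hji => hadj (hpa j hj hji)
      exact ⟨hi, fun v hv => by
        simpa [hubParents] using hpa _ (mem_lowerPart.1 hv) (Fin.castSucc_ne_last v)⟩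
    · rintro ⟨hlast, hsub⟩
      refine ⟨_, hlast, fun j hj hjl => ?_⟩
      induction j using Fin.lastCases with
      | last => exact absurd rfl hjl
      | cast v => simpa [hubParents] using hsub (mem_lowerPart.2 hj)
  simp only [DAGraph.cim, imsetRel, hubImset, hsink, hne, hS, true_and, false_or]

theorem hubImset_of_inOneBlock {P : Finset (Fin n)} (hP : InOneBlock comp P) :
    hubImset comp P = hubImset comp ∅ := by
  funext S
  refine if_congr (and_congr_right fun _ => ⟨?_, ?_⟩) rfl rfl
  · rintro (h | ⟨-, h⟩)
    exacts [Or.inl h, Or.inl (hP.mono h)]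
  · rintro (h | ⟨-, h⟩)
    exacts [Or.inl h, Or.inl ((inOneBlock_empty comp).mono h)]

-- The parents of the hub come first, then the hub, then all other vertices.
def hubRank (P : Finset (Fin n)) : Fin (n + 1) → ℕ :=
  Fin.lastCases n fun v => if v ∈ P then v else n + 1 + v

theorem hubRank_injective (P : Finset (Fin n)) : Function.Injective (hubRank P) := by
  intro a b hab
  induction a using Fin.lastCases <;> induction b using Fin.lastCases <;>
    simp only [hubRank, Fin.lastCases_last, Fin.lastCases_castSucc] at hab <;>
    grind

def hubDAG (comp : Fin n → Fin m) (P : Finset (Fin n)) : DAGraph (n + 1) :=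
  DAGraph.ofRank (starJoin n m comp) (hubRank P)

theorem skeleton_hubDAG (P : Finset (Fin n)) :
    (hubDAG comp P).skeleton = starJoin n m comp :=
  DAGraph.skeleton_ofRank _ (hubRank_injective P)

theorem hubParents_hubDAG (P : Finset (Fin n)) : hubParents (hubDAG comp P) = P := by
  ext v
  simp only [hubParents, hubDAG, DAGraph.ofRank, hubRank, mem_filter, mem_univ, true_and,
    starJoin_adj_castSucc_last, Fin.lastCases_last, Fin.lastCases_castSucc]
  by_cases hv : v ∈ P <;> simp [hv, add_assoc]

def hubSet (Q : Finset (Fin n)) : Finset (Fin (n + 1)) :=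
  insert (Fin.last n) (Q.map Fin.castSuccEmb)

theorem hubImset_hubSet (P Q : Finset (Fin n)) :
    hubImset comp P (hubSet Q) = if InOneBlock comp Q ∨ Q ⊆ P then 1 else 0 := by
  have hlower : lowerPart (hubSet Q) = Q := by
    ext v
    simp [hubSet, Fin.castSucc_ne_last]
  have hlast : Fin.last n ∈ hubSet Q := mem_insert_self _ _
  simp only [hubImset, hlower, hlast, show (hubSet Q).Nonempty from ⟨_, hlast⟩, true_and]

theorem linearIndependent_hubImset (comp : Fin n → Fin m) :
    LinearIndependent ℝ fun P : {P : Finset (Fin n) // InOneBlock comp P → P = ∅} =>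
      hubImset comp P.1 := by
  refine linearIndependent_of_eval_triangular _ (fun Q => hubSet Q.1) (fun Q P h => ?_)
    fun P => by simp [hubImset_hubSet]
  rw [hubImset_hubSet] at h
  by_cases hQ : InOneBlock comp Q.1
  · exact (Q.2 hQ).trans_subset (empty_subset P.1)
  · simpa [hQ] using h

theorem setOf_cim_eq_range_hubImset (comp : Fin n → Fin m) :
    {x | ∃ D : DAGraph (n + 1), D.skeleton = starJoin n m comp ∧ x = D.cim} =
      Set.range fun P : {P : Finset (Fin n) // InOneBlock comp P → P = ∅} =>
        hubImset comp P.1 := by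
  ext x
  constructor
  · rintro ⟨D, hD, rfl⟩
    rw [cim_eq_hubImset hD]
    by_cases hP : InOneBlock comp (hubParents D)
    · exact ⟨⟨∅, fun _ => rfl⟩, (hubImset_of_inOneBlock hP).symm⟩
    · exact ⟨⟨hubParents D, fun h => absurd h hP⟩, rfl⟩
  · rintro ⟨P, rfl⟩
    refine ⟨hubDAG comp P.1, skeleton_hubDAG P.1, ?_⟩
    rw [cim_eq_hubImset (skeleton_hubDAG P.1), hubParents_hubDAG]

end StarJoin

theorem stmt14_general (n m : ℕ) (comp : Fin n → Fin m)
    (V : Set (Finset (Fin (n + 1)) → ℝ))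
    (hV : V = {x | ∃ D : DAGraph (n + 1), D.skeleton = starJoin n m comp ∧ x = D.cim}) :
    V.ncard = 2 ^ n - ∑ s : Fin m, (2 ^ (Finset.univ.filter fun v => comp v = s).card - 1) ∧
      AffineIndependent ℝ ((↑) : V → (Finset (Fin (n + 1)) → ℝ)) := by
  rw [setOf_cim_eq_range_hubImset] at hV
  subst hV
  have hli := linearIndependent_hubImset comp
  refine ⟨?_, hli.affineIndependent.range⟩
  rw [Set.ncard_range_of_injective hli.injective, natCard_inOneBlock_imp_eq_empty,
    Fintype.card_fin]

/-- In the setting of Statement 13, `CIM_G` is a simplex of dimension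
`2^{p−1} − 1 − ∑ₛ (2^{pₛ} − 1)`: the characteristic imsets of DAGs with skeleton `G` form
an affinely independent set of cardinality `2^{p−1} − ∑ₛ (2^{pₛ} − 1)`. -/
theorem stmt14 (n m : ℕ) (comp : Fin n → Fin m) (hsurj : Function.Surjective comp)
    (V : Set (Finset (Fin (n + 1)) → ℝ))
    (hV : V = {x | ∃ D : DAGraph (n + 1), D.skeleton = starJoin n m comp ∧ x = D.cim}) :
    V.ncard = 2 ^ n - ∑ s : Fin m, (2 ^ (Finset.univ.filter fun v => comp v = s).card - 1) ∧
      AffineIndependent ℝ ((↑) : V → (Finset (Fin (n + 1)) → ℝ)) :=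
  stmt14_general n m comp V hV
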